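/- Let Ω ⊆ ℝⁿ be open, f : Ω×ℝ → ℝ continuous, and g : ℝ → ℝ continuous satisfying (g₀). Set h(x, s) = e^{3G(Φ_g⁻¹(s))} f(x, Φ_g⁻¹(s)). Then a continuous function u : Ω → ℝ is a viscosity solution of Δ_∞w + g(w)|Dw|⁴ + f(x, w) = 0 in Ω if and only if v = Φ_g ∘ u is a viscosity solution of Δ_∞w + h(x, w) = 0 in Ω. -/

import Mathlib

open Real Filter Set

/-- Gradient of `u` at `x` (vector of partial derivatives). -/
noncomputable def vgrad {n : ℕ} (u : (Fin n → ℝ) → ℝ) (x : Fin n → ℝ) : Fin n → ℝ :=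
  fun i => fderiv ℝ u x (Pi.single i 1)

/-- Hessian matrix of `u` at `x`. -/
noncomputable def vhess {n : ℕ} (u : (Fin n → ℝ) → ℝ) (x : Fin n → ℝ) :
    Matrix (Fin n) (Fin n) ℝ :=
  Matrix.of fun i j => fderiv ℝ (fun y => fderiv ℝ u y (Pi.single j 1)) x (Pi.single i 1)

noncomputable def Gg (g : ℝ → ℝ) (s : ℝ) : ℝ := ∫ τ in (0:ℝ)..s, g τ

noncomputable def Phig (g : ℝ → ℝ) (t : ℝ) : ℝ := ∫ s in (0:ℝ)..t, Real.exp (Gg g s)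

/-- Condition `(g₀)`. -/
def g0cond (g : ℝ → ℝ) : Prop :=
  ∃ s₀ : ℝ, 0 ≤ s₀ ∧ (∀ s, s₀ ≤ s → 0 ≤ g s) ∧ (∀ s, s ≤ -s₀ → g s ≤ 0)

/-- Infinity-Laplacian `Δ_∞ u = ⟨D²u Du, Du⟩`. -/
noncomputable def infLap {n : ℕ} (u : (Fin n → ℝ) → ℝ) (x : Fin n → ℝ) : ℝ :=
  dotProduct (Matrix.mulVec (vhess u x) (vgrad u x)) (vgrad u x)

/-- Squared Euclidean norm `|p|²` of a vector. -/
noncomputable def normSq {n : ℕ} (p : Fin n → ℝ) : ℝ := ∑ i, p i ^ 2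
/-- Viscosity subsolution of `𝓕(x, w, Dw, D²w) = 0` in `Ω`. -/
def ViscositySubsolution {n : ℕ} (Ω : Set (Fin n → ℝ))
    (F : (Fin n → ℝ) → ℝ → (Fin n → ℝ) → Matrix (Fin n) (Fin n) ℝ → ℝ)
    (w : (Fin n → ℝ) → ℝ) : Prop :=
  ∀ φ : (Fin n → ℝ) → ℝ, ContDiffOn ℝ 2 φ Ω →
    ∀ x₀ ∈ Ω, IsLocalMaxOn (fun x => w x - φ x) Ω x₀ →
      F x₀ (w x₀) (vgrad φ x₀) (vhess φ x₀) ≤ 0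

/-- Viscosity supersolution of `𝓕(x, w, Dw, D²w) = 0` in `Ω`. -/
def ViscositySupersolution {n : ℕ} (Ω : Set (Fin n → ℝ))
    (F : (Fin n → ℝ) → ℝ → (Fin n → ℝ) → Matrix (Fin n) (Fin n) ℝ → ℝ)
    (w : (Fin n → ℝ) → ℝ) : Prop :=
  ∀ φ : (Fin n → ℝ) → ℝ, ContDiffOn ℝ 2 φ Ω →
    ∀ x₀ ∈ Ω, IsLocalMinOn (fun x => w x - φ x) Ω x₀ →
      0 ≤ F x₀ (w x₀) (vgrad φ x₀) (vhess φ x₀)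

/-- Viscosity solution: both a viscosity subsolution and a viscosity supersolution. -/
def ViscositySolution {n : ℕ} (Ω : Set (Fin n → ℝ))
    (F : (Fin n → ℝ) → ℝ → (Fin n → ℝ) → Matrix (Fin n) (Fin n) ℝ → ℝ)
    (w : (Fin n → ℝ) → ℝ) : Prop :=
  ViscositySubsolution Ω F w ∧ ViscositySupersolution Ω F w

/-!
A C² nondecreasing change of variables `χ` turns a test function `ψ` touching `v` at `x₀` into
the test function `χ ∘ (ψ + v x₀ - ψ x₀)` touching `χ ∘ v` at `x₀`, and by the chain rule
`Δ_∞(χ ∘ ψ) = χ'³ Δ_∞ψ + χ'² χ'' |Dψ|⁴`. Since `Φ_g' = e^G` and `Φ_g'' = g e^G`, substituting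
`χ = Φ_g` into the second equation gives `e^{3G}` times the first one, and substituting
`χ = Φ_g⁻¹` into the first gives `e^{-3G(Φ_g⁻¹)}` times the second; positive factors preserve
the viscosity inequalities.
-/

open Matrix

theorem exp_three_mul (t : ℝ) : exp (3 * t) = exp t ^ 3 := by
  rw [← exp_nat_mul]
  norm_num

theorem contDiff_succ_of_hasDerivAt {f f' : ℝ → ℝ} {n : ℕ} (hf : ∀ x, HasDerivAt f (f' x) x)
    (hf' : ContDiff ℝ n f') : ContDiff ℝ (n + 1) f := by
  have hderiv : deriv f = f' := funext fun x => (hf x).deriv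
  exact contDiff_succ_iff_deriv.mpr
    ⟨fun x => (hf x).differentiableAt, by simp, hderiv ▸ hf'⟩

section Phig

variable {g : ℝ → ℝ} (hg : Continuous g)
include hg

theorem hasDerivAt_Gg (s : ℝ) : HasDerivAt (Gg g) (g s) s :=
  intervalIntegral.integral_hasDerivAt_right (hg.intervalIntegrable _ _)
    (hg.stronglyMeasurableAtFilter _ _) hg.continuousAt

theorem contDiff_Gg : ContDiff ℝ 1 (Gg g) :=
  contDiff_succ_of_hasDerivAt (n := 0) (hasDerivAt_Gg hg) (contDiff_zero.mpr hg)

theorem hasDerivAt_Phig (t : ℝ) : HasDerivAt (Phig g) (exp (Gg g t)) t := by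
  have hc : Continuous fun s => exp (Gg g s) := continuous_exp.comp (contDiff_Gg hg).continuous
  exact intervalIntegral.integral_hasDerivAt_right (hc.intervalIntegrable _ _)
    (hc.stronglyMeasurableAtFilter _ _) hc.continuousAt

theorem deriv_Phig : deriv (Phig g) = fun t => exp (Gg g t) :=
  funext fun t => (hasDerivAt_Phig hg t).deriv

theorem deriv_deriv_Phig (t : ℝ) : deriv (deriv (Phig g)) t = exp (Gg g t) * g t := by
  rw [deriv_Phig hg, ((hasDerivAt_Gg hg t).exp).deriv]

theorem contDiff_Phig : ContDiff ℝ 2 (Phig g) :=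
  contDiff_succ_of_hasDerivAt (n := 1) (hasDerivAt_Phig hg) (contDiff_exp.comp (contDiff_Gg hg))

theorem strictMono_Phig : StrictMono (Phig g) :=
  strictMono_of_deriv_pos fun t => by rw [deriv_Phig hg]; exact exp_pos _

variable {Φinv : ℝ → ℝ} (hright : Function.RightInverse Φinv (Phig g))
include hright

theorem monotone_of_rightInverse_Phig : Monotone Φinv :=
  ((strictMono_Phig hg).orderIsoOfRightInverse _ Φinv hright).symm.monotone

theorem continuous_of_rightInverse_Phig : Continuous Φinv :=
  ((strictMono_Phig hg).orderIsoOfRightInverse _ Φinv hright).symm.continuous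

theorem hasDerivAt_of_rightInverse_Phig (s : ℝ) :
    HasDerivAt Φinv (exp (Gg g (Φinv s)))⁻¹ s :=
  .of_local_left_inverse (continuous_of_rightInverse_Phig hg hright).continuousAt
    (hasDerivAt_Phig hg (Φinv s)) (exp_ne_zero _) (.of_forall hright)

theorem deriv_of_rightInverse_Phig : deriv Φinv = fun s => (exp (Gg g (Φinv s)))⁻¹ :=
  funext fun s => (hasDerivAt_of_rightInverse_Phig hg hright s).deriv

theorem deriv_deriv_of_rightInverse_Phig (s : ℝ) :
    deriv (deriv Φinv) s = -g (Φinv s) * (exp (Gg g (Φinv s)))⁻¹ ^ 2 := by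
  have hexp := ((hasDerivAt_Gg hg (Φinv s)).comp s
    (hasDerivAt_of_rightInverse_Phig hg hright s)).exp
  rw [deriv_of_rightInverse_Phig hg hright]
  refine (hexp.fun_inv (exp_ne_zero _)).deriv.trans ?_
  simp only [Function.comp_apply]
  field_simp

theorem contDiff_of_rightInverse_Phig : ContDiff ℝ 2 Φinv := by
  have hd := hasDerivAt_of_rightInverse_Phig hg hright
  have hc1 : ContDiff ℝ 1 Φinv := contDiff_succ_of_hasDerivAt (n := 0) hd <|
    contDiff_zero.mpr <| ((continuous_exp.comp ((contDiff_Gg hg).continuous.comp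
      (continuous_of_rightInverse_Phig hg hright))).inv₀ fun _ => exp_ne_zero _)
  exact contDiff_succ_of_hasDerivAt (n := 1) hd <|
    (contDiff_exp.comp ((contDiff_Gg hg).comp hc1)).inv fun _ => exp_ne_zero _

end Phig

theorem normSq_eq_dotProduct {n : ℕ} (p : Fin n → ℝ) : normSq p = p ⬝ᵥ p := by
  simp only [normSq, dotProduct, sq]

theorem dotProduct_smul_vecMulVec_add_smul_mulVec {ι R : Type*} [Fintype ι] [CommRing R]
    (a b c : R) (p : ι → R) (X : Matrix ι ι R) :
    (a • vecMulVec p p + b • X) *ᵥ (c • p) ⬝ᵥ (c • p)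
      = a * c ^ 2 * (p ⬝ᵥ p) ^ 2 + b * c ^ 2 * (X *ᵥ p ⬝ᵥ p) := by
  simp only [add_mulVec, smul_mulVec, mulVec_smul, vecMulVec_mulVec, add_dotProduct,
    smul_dotProduct, dotProduct_smul, smul_eq_mul, MulOpposite.smul_eq_mul_unop,
    MulOpposite.unop_op]
  ring

theorem vgrad_add_const {n : ℕ} (ψ : (Fin n → ℝ) → ℝ) (c : ℝ) (x : Fin n → ℝ) :
    vgrad (fun y => ψ y + c) x = vgrad ψ x := by
  unfold vgrad
  simp only [fderiv_add_const]

theorem vhess_add_const {n : ℕ} (ψ : (Fin n → ℝ) → ℝ) (c : ℝ) (x : Fin n → ℝ) :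
    vhess (fun y => ψ y + c) x = vhess ψ x := by
  rw [vhess, vhess]
  simp only [fderiv_add_const]

section ChainRule

variable {n : ℕ} {ψ : (Fin n → ℝ) → ℝ} {χ : ℝ → ℝ} {x : Fin n → ℝ}

theorem vgrad_comp (hχ : DifferentiableAt ℝ χ (ψ x)) (hψ : DifferentiableAt ℝ ψ x) :
    vgrad (χ ∘ ψ) x = deriv χ (ψ x) • vgrad ψ x := by
  ext i
  simp only [vgrad, fderiv_comp x hχ hψ, ContinuousLinearMap.comp_apply, fderiv_eq_smul_deriv,
    smul_eq_mul, mul_comm, Pi.smul_apply]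

theorem vhess_comp (hχ : ContDiff ℝ 2 χ) (hψ : ContDiffAt ℝ 2 ψ x) :
    vhess (χ ∘ ψ) x = deriv (deriv χ) (ψ x) • vecMulVec (vgrad ψ x) (vgrad ψ x)
      + deriv χ (ψ x) • vhess ψ x := by
  ext i j
  have hχ' : Differentiable ℝ (deriv χ) := (hχ.deriv' (n := 1)).differentiable one_ne_zero
  have hgrad : (fun y => vgrad (χ ∘ ψ) y j) =ᶠ[nhds x] fun y => deriv χ (ψ y) * vgrad ψ y j := by
    filter_upwards [hψ.eventually (by simp)] with y hy
    rw [vgrad_comp ((hχ.differentiable two_ne_zero) _) (hy.differentiableAt two_ne_zero)]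
    rfl
  have hA : HasFDerivAt (fun y => deriv χ (ψ y)) (deriv (deriv χ) (ψ x) • fderiv ℝ ψ x) x :=
    (hχ' _).hasDerivAt.comp_hasFDerivAt x (hψ.differentiableAt two_ne_zero).hasFDerivAt
  have hB : DifferentiableAt ℝ (fun y => vgrad ψ y j) x :=
    ((hψ.fderiv_right (m := 1) le_rfl).differentiableAt one_ne_zero).clm_apply
      (differentiableAt_const _)
  change fderiv ℝ (fun y => vgrad (χ ∘ ψ) y j) x (Pi.single i 1) = _
  rw [hgrad.fderiv_eq, (hA.fun_mul hB.hasFDerivAt).fderiv]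
  simp only [vgrad, vhess, vecMulVec, _root_.add_apply, _root_.smul_apply, smul_eq_mul, smul_of,
    Matrix.add_apply, of_apply, Pi.smul_apply]
  ring

end ChainRule

section LocalExtr

variable {X : Type*} [TopologicalSpace X] {s : Set X} {v φ : X → ℝ} {x₀ : X} {χ : ℝ → ℝ}

theorem IsLocalMaxOn.comp_sub_comp_add_const (hχ : Monotone χ)
    (h : IsLocalMaxOn (fun x => v x - φ x) s x₀) :
    IsLocalMaxOn (fun x => (χ ∘ v) x - (χ ∘ fun x => φ x + (v x₀ - φ x₀)) x) s x₀ := by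
  filter_upwards [h] with x hx
  have : χ (v x) ≤ χ (φ x + (v x₀ - φ x₀)) := hχ (by linarith)
  simp only [Function.comp_apply, add_sub_cancel, sub_self]
  linarith

theorem IsLocalMinOn.comp_sub_comp_add_const (hχ : Monotone χ)
    (h : IsLocalMinOn (fun x => v x - φ x) s x₀) :
    IsLocalMinOn (fun x => (χ ∘ v) x - (χ ∘ fun x => φ x + (v x₀ - φ x₀)) x) s x₀ := by
  filter_upwards [h] with x hx
  have : χ (φ x + (v x₀ - φ x₀)) ≤ χ (v x) := hχ (by linarith)
  simp only [Function.comp_apply, add_sub_cancel, sub_self]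
  linarith

end LocalExtr

section Viscosity

variable {n : ℕ} {Ω : Set (Fin n → ℝ)}
  {F F' : (Fin n → ℝ) → ℝ → (Fin n → ℝ) → Matrix (Fin n) (Fin n) ℝ → ℝ}
  {χ k : ℝ → ℝ} {v : (Fin n → ℝ) → ℝ}

theorem apply_jet_comp_add_const_eq_mul (hΩ : IsOpen Ω) (hχ : ContDiff ℝ 2 χ)
    (hF : ∀ x t p X, F x (χ t) (deriv χ t • p)
      (deriv (deriv χ) t • vecMulVec p p + deriv χ t • X) = k t * F' x t p X)
    {ψ : (Fin n → ℝ) → ℝ} (hψ : ContDiffOn ℝ 2 ψ Ω) {x₀ : Fin n → ℝ} (hx₀ : x₀ ∈ Ω) :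
    F x₀ ((χ ∘ v) x₀) (vgrad (χ ∘ fun x => ψ x + (v x₀ - ψ x₀)) x₀)
      (vhess (χ ∘ fun x => ψ x + (v x₀ - ψ x₀)) x₀)
      = k (v x₀) * F' x₀ (v x₀) (vgrad ψ x₀) (vhess ψ x₀) := by
  have hψ' : ContDiffAt ℝ 2 (fun x => ψ x + (v x₀ - ψ x₀)) x₀ :=
    (hψ.contDiffAt (hΩ.mem_nhds hx₀)).add contDiffAt_const
  rw [vgrad_comp ((hχ.differentiable two_ne_zero) _) (hψ'.differentiableAt two_ne_zero),
    vhess_comp hχ hψ', vgrad_add_const, vhess_add_const, add_sub_cancel]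
  exact hF _ _ _ _

variable (hΩ : IsOpen Ω) (hχ : ContDiff ℝ 2 χ) (hχm : Monotone χ) (hk : ∀ t, 0 < k t)
  (hF : ∀ x t p X, F x (χ t) (deriv χ t • p)
    (deriv (deriv χ) t • vecMulVec p p + deriv χ t • X) = k t * F' x t p X)
include hΩ hχ hχm hk hF

theorem ViscositySubsolution.of_comp (h : ViscositySubsolution Ω F (χ ∘ v)) :
    ViscositySubsolution Ω F' v := by
  intro ψ hψ x₀ hx₀ hmax
  have := h _ (hχ.comp_contDiffOn (hψ.add contDiffOn_const)) x₀ hx₀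
    (hmax.comp_sub_comp_add_const hχm)
  rw [apply_jet_comp_add_const_eq_mul hΩ hχ hF hψ hx₀] at this
  exact nonpos_of_mul_nonpos_right this (hk _)

theorem ViscositySupersolution.of_comp (h : ViscositySupersolution Ω F (χ ∘ v)) :
    ViscositySupersolution Ω F' v := by
  intro ψ hψ x₀ hx₀ hmin
  have := h _ (hχ.comp_contDiffOn (hψ.add contDiffOn_const)) x₀ hx₀
    (hmin.comp_sub_comp_add_const hχm)
  rw [apply_jet_comp_add_const_eq_mul hΩ hχ hF hψ hx₀] at this
  exact nonneg_of_mul_nonneg_right this (hk _)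

theorem ViscositySolution.of_comp (h : ViscositySolution Ω F (χ ∘ v)) :
    ViscositySolution Ω F' v :=
  ⟨h.1.of_comp hΩ hχ hχm hk hF, h.2.of_comp hΩ hχ hχm hk hF⟩

end Viscosity

theorem stmt10_general {n : ℕ} (Ω : Set (Fin n → ℝ)) (hΩ : IsOpen Ω)
    (f : (Fin n → ℝ) → ℝ → ℝ)
    (g : ℝ → ℝ) (hg : Continuous g)
    (Φinv : ℝ → ℝ) (hleft : ∀ t : ℝ, Φinv (Phig g t) = t)
    (hright : ∀ s : ℝ, Phig g (Φinv s) = s)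
    (u : (Fin n → ℝ) → ℝ) :
    ViscositySolution Ω
      (fun x r p X => dotProduct (Matrix.mulVec X p) p
        + g r * (normSq p) ^ 2 + f x r) u ↔
    ViscositySolution Ω
      (fun x r p X => dotProduct (Matrix.mulVec X p) p
        + Real.exp (3 * Gg g (Φinv r)) * f x (Φinv r)) (Phig g ∘ u) := by
  constructor
  · intro hu
    rw [← show Φinv ∘ Phig g ∘ u = u from funext fun x => hleft (u x)] at hu
    refine hu.of_comp hΩ (contDiff_of_rightInverse_Phig hg hright)
      (monotone_of_rightInverse_Phig hg hright) (k := fun t => (exp (Gg g (Φinv t)))⁻¹ ^ 3)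
      (fun _ => by positivity) fun x t p X => ?_
    rw [deriv_deriv_of_rightInverse_Phig hg hright, deriv_of_rightInverse_Phig hg hright,
      dotProduct_smul_vecMulVec_add_smul_mulVec, normSq_eq_dotProduct, smul_dotProduct,
      dotProduct_smul, smul_eq_mul, smul_eq_mul, exp_three_mul]
    field_simp
    ring
  · exact ViscositySolution.of_comp hΩ (contDiff_Phig hg) (strictMono_Phig hg).monotone
      (k := fun t => exp (Gg g t) ^ 3) (fun _ => by positivity) fun x t p X => by
        rw [deriv_deriv_Phig hg, deriv_Phig hg, dotProduct_smul_vecMulVec_add_smul_mulVec,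
          normSq_eq_dotProduct, hleft, exp_three_mul]
        ring

/-- a continuous u is a viscosity solution of Δ_∞w + g(w)|Dw|⁴ + f(x,w) = 0 in Ω
iff v = Φ_g ∘ u is a viscosity solution of Δ_∞w + h(x,w) = 0 in Ω,
with h(x,s) = e^{3G(Φ_g⁻¹(s))} f(x, Φ_g⁻¹(s)). -/
theorem stmt10 {n : ℕ} (Ω : Set (Fin n → ℝ)) (hΩ : IsOpen Ω)
    (f : (Fin n → ℝ) → ℝ → ℝ)
    (hf : ContinuousOn (fun q : (Fin n → ℝ) × ℝ => f q.1 q.2) (Ω ×ˢ Set.univ))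
    (g : ℝ → ℝ) (hg : Continuous g) (hg0 : g0cond g)
    (Φinv : ℝ → ℝ) (hleft : ∀ t : ℝ, Φinv (Phig g t) = t)
    (hright : ∀ s : ℝ, Phig g (Φinv s) = s)
    (u : (Fin n → ℝ) → ℝ) (hu : ContinuousOn u Ω) :
    ViscositySolution Ω
      (fun x r p X => dotProduct (Matrix.mulVec X p) p
        + g r * (normSq p) ^ 2 + f x r) u ↔
    ViscositySolution Ω
      (fun x r p X => dotProduct (Matrix.mulVec X p) p
        + Real.exp (3 * Gg g (Φinv r)) * f x (Φinv r)) (Phig g ∘ u) :=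
  stmt10_general Ω hΩ f g hg Φinv hleft hright u
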